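/- arXiv:2401.13132 — 8 statements merged into one kernel-verified Lean document; each statement's English description precedes it below -/
import Mathlib

section
/- A probability distribution p on a finite state space Ω is (Π,t)-disintegrable if and only if p lies in the convex hull of the set of types {t(ω) : ω ∈ Ω}. -/
open Finset

variable {Ω : Type*} [Fintype Ω]

open Classical in
/-- The mass that a (finitely additive) distribution `p` assigns to an event `E`. -/
noncomputable def mass (p : Ω → ℝ) (E : Set Ω) : ℝ :=
  ∑ ω, if ω ∈ E then p ω else 0

/-- Expectation of `f` with respect to the distribution `q`. -/
def expect (q f : Ω → ℝ) : ℝ := ∑ ω, q ω * f ω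

/-- `p` is a probability distribution on the finite state space `Ω`. -/
def IsProbDist (p : Ω → ℝ) : Prop := (∀ ω, 0 ≤ p ω) ∧ ∑ ω, p ω = 1

/-- `part` sends each state to its partition cell. -/
def IsPartitionMap (part : Ω → Set Ω) : Prop :=
  (∀ ω, ω ∈ part ω) ∧ ∀ ω ω', ω' ∈ part ω → part ω' = part ω

/-- A single player information structure `(Ω, Π, t)`: `Π` a partition of `Ω`,
`t : Ω → Δ(Ω)` with `t ω (π ω) = 1`, and `t` constant on partition cells. -/
def InfoStructure1 (part : Ω → Set Ω) (t : Ω → Ω → ℝ) : Prop :=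
  IsPartitionMap part ∧ (∀ ω, IsProbDist (t ω)) ∧ (∀ ω, mass (t ω) (part ω) = 1) ∧
    (∀ ω ω', ω' ∈ part ω → t ω' = t ω)

/-- `p` is `(Π,t)`-disintegrable: `p (E ∩ π) = t ω E * p π` for every event `E`,
every partition cell `π` and every `ω ∈ π`. -/
def Disintegrable (part : Ω → Set Ω) (t : Ω → Ω → ℝ) (p : Ω → ℝ) : Prop :=
  ∀ (E : Set Ω) (ω : Ω), mass p (E ∩ part ω) = mass (t ω) E * mass p (part ω)

/-- `p` is `(Π,t)`-conglomerable: for every event `E`,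
`min_ω t ω E ≤ p E ≤ max_ω t ω E`. -/
def Conglomerable [Nonempty Ω] (t : Ω → Ω → ℝ) (p : Ω → ℝ) : Prop :=
  ∀ E : Set Ω,
    univ.inf' univ_nonempty (fun ω => mass (t ω) E) ≤ mass p E ∧
      mass p E ≤ univ.sup' univ_nonempty (fun ω => mass (t ω) E)

/-- A semi-trade: the player expects a nonnegative gain at every state. -/
def SemiTrade1 (t : Ω → Ω → ℝ) (f : Ω → ℝ) : Prop := ∀ ω, 0 ≤ expect (t ω) f

/-- `p` is a money pump: some semi-trade has negative expectation under `p`. -/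
def MoneyPump1 (t : Ω → Ω → ℝ) (p : Ω → ℝ) : Prop :=
  ∃ f : Ω → ℝ, SemiTrade1 t f ∧ expect p f < 0

open Classical

lemma supp_lemma {part : Ω → Set Ω} {t : Ω → Ω → ℝ} (hT : InfoStructure1 part t)
    (ω ω' : Ω) (h : ω' ∉ part ω) : t ω ω' = 0 := by
  have h1 : mass (t ω) (part ω) = 1 := hT.2.2.1 ω
  have h2 : ∑ x, t ω x = 1 := (hT.2.1 ω).2
  have h0 : ∀ x, 0 ≤ t ω x := (hT.2.1 ω).1
  have key : ∑ x, (t ω x - if x ∈ part ω then t ω x else 0) = 0 := by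
    rw [Finset.sum_sub_distrib, h2]
    unfold mass at h1
    rw [show (∑ x, if x ∈ part ω then t ω x else 0) = 1 from by convert h1 using 2]
    ring
  have := (Finset.sum_eq_zero_iff_of_nonneg (fun x _ => by
    by_cases hx : x ∈ part ω <;> simp [hx, h0 x])).1 key ω' (mem_univ _)
  simpa [h] using this

lemma mass_inter_self {part : Ω → Set Ω} {t : Ω → Ω → ℝ} (hT : InfoStructure1 part t)
    (ω : Ω) (E : Set Ω) : mass (t ω) (E ∩ part ω) = mass (t ω) E := by
  unfold mass
  apply Finset.sum_congr rfl
  intro x _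
  by_cases hx : x ∈ part ω
  · by_cases hE : x ∈ E <;> simp [hx, hE]
  · by_cases hE : x ∈ E <;> simp [hx, hE, supp_lemma hT ω x hx]

lemma point_lemma {part : Ω → Set Ω} {t : Ω → Ω → ℝ} (hT : InfoStructure1 part t)
    (ω ω₀ : Ω) (E : Set Ω) :
    mass (t ω) (E ∩ part ω₀) = mass (t ω₀) E * mass (t ω) (part ω₀) := by
  by_cases h : ω ∈ part ω₀
  · have hte : t ω = t ω₀ := hT.2.2.2 ω₀ ω h
    rw [hte, hT.2.2.1 ω₀, mul_one, mass_inter_self hT ω₀ E]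
  · have hz : ∀ x ∈ part ω₀, t ω x = 0 := by
      intro x hx
      apply supp_lemma hT
      intro hxω
      have e1 : part x = part ω := hT.1.2 ω x hxω
      have e2 : part x = part ω₀ := hT.1.2 ω₀ x hx
      have : part ω = part ω₀ := e1.symm.trans e2
      exact h (this ▸ hT.1.1 ω)
    have m1 : mass (t ω) (part ω₀) = 0 := by
      unfold mass; apply Finset.sum_eq_zero; intro x _
      by_cases hx : x ∈ part ω₀ <;> simp [hx, hz x]
    have m2 : mass (t ω) (E ∩ part ω₀) = 0 := by
      unfold mass; apply Finset.sum_eq_zero; intro x _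
      by_cases hx : x ∈ E ∩ part ω₀ <;> simp [hx, fun h : x ∈ E ∩ part ω₀ => hz x h.2]
    rw [m1, m2, mul_zero]

lemma mass_singleton (q : Ω → ℝ) (x : Ω) : mass q {x} = q x := by
  unfold mass
  rw [Finset.sum_eq_single_of_mem x (mem_univ x)]
  · simp
  · intro b _ hb; simp [hb]

lemma mass_cell {part : Ω → Set Ω} (hPart : IsPartitionMap part) (p : Ω → ℝ) (ω₀ : Ω) :
    mass p (part ω₀) = ∑ ω ∈ univ.filter (fun ω => part ω = part ω₀), p ω := by
  unfold mass
  rw [Finset.sum_filter]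
  apply Finset.sum_congr rfl
  intro x _
  congr 1
  simp only [eq_iff_iff]
  constructor
  · intro hx; exact hPart.2 ω₀ x hx
  · intro hx; exact hx ▸ hPart.1 x

lemma rep_lemma {part : Ω → Set Ω} {t : Ω → Ω → ℝ} {p : Ω → ℝ}
    (hT : InfoStructure1 part t) (hd : Disintegrable part t p) (x : Ω) :
    ∑ ω, p ω * t ω x = p x := by
  rw [← Finset.sum_fiberwise_of_maps_to (t := univ.image part) (g := part)
      (fun i _ => mem_image_of_mem part (mem_univ i)) (fun ω => p ω * t ω x)]
  have step : ∀ π ∈ univ.image part,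
      (∑ ω ∈ univ.filter (fun ω => part ω = π), p ω * t ω x)
        = if x ∈ π then p x else 0 := by
    intro π hπ
    obtain ⟨ω₀, -, rfl⟩ := mem_image.1 hπ
    have hconst : ∀ ω ∈ univ.filter (fun ω => part ω = part ω₀), t ω = t ω₀ := by
      intro ω hω
      have hωe : part ω = part ω₀ := (mem_filter.1 hω).2
      exact hT.2.2.2 ω₀ ω (hωe ▸ hT.1.1 ω)
    calc (∑ ω ∈ univ.filter (fun ω => part ω = part ω₀), p ω * t ω x)
        = ∑ ω ∈ univ.filter (fun ω => part ω = part ω₀), p ω * t ω₀ x := by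
          apply Finset.sum_congr rfl; intro ω hω; rw [hconst ω hω]
      _ = t ω₀ x * mass p (part ω₀) := by
          rw [mass_cell hT.1, Finset.mul_sum]; apply Finset.sum_congr rfl; intros; ring
      _ = mass (t ω₀) {x} * mass p (part ω₀) := by rw [mass_singleton]
      _ = mass p ({x} ∩ part ω₀) := (hd {x} ω₀).symm
      _ = if x ∈ part ω₀ then p x else 0 := by
          unfold mass
          rw [Finset.sum_eq_single_of_mem x (mem_univ x)]
          · by_cases hx : x ∈ part ω₀ <;> simp [hx]
          · intro b _ hb
            have : b ∉ ({x} : Set Ω) ∩ part ω₀ := fun hc => hb hc.1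
            simp [this]
  rw [Finset.sum_congr rfl step]
  rw [Finset.sum_eq_single_of_mem (part x) (mem_image_of_mem part (mem_univ x))]
  · simp [hT.1.1 x]
  · intro π hπ hne
    obtain ⟨ω₀, -, rfl⟩ := mem_image.1 hπ
    have : x ∉ part ω₀ := fun hc => hne ((hT.1.2 ω₀ x hc).symm)
    simp [this]

/-- `p` is `(Π,t)`-disintegrable iff `p` lies in the convex hull of
the set of types `{t ω : ω ∈ Ω}`. -/
theorem disintegrable_iff_mem_convexHull [Nonempty Ω]
    (part : Ω → Set Ω) (t : Ω → Ω → ℝ) (p : Ω → ℝ)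
    (hT : InfoStructure1 part t) (hp : IsProbDist p) :
    Disintegrable part t p ↔ p ∈ convexHull ℝ (Set.range t) := by
  constructor
  · intro hd
    have hmem := Finset.centerMass_mem_convexHull (univ : Finset Ω) (w := p)
      (fun i _ => hp.1 i) (by rw [hp.2]; norm_num) (z := t)
      (fun i _ => Set.mem_range_self i)
    have hcm : (univ : Finset Ω).centerMass p t = ∑ i, p i • t i :=
      Finset.centerMass_eq_of_sum_1 _ _ hp.2
    rw [hcm] at hmem
    have : p = ∑ i, p i • t i := by
      funext x
      rw [Finset.sum_apply]
      simp only [Pi.smul_apply, smul_eq_mul]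
      exact (rep_lemma hT hd x).symm
    rw [this]; exact hmem
  · intro h
    rw [show Set.range t = ↑(univ.image t) by simp] at h
    obtain ⟨w, hw0, hw1, hwc⟩ := Finset.mem_convexHull.1 h
    have hp' : ∀ x, p x = ∑ q ∈ univ.image t, w q * q x := by
      intro x
      rw [← hwc, Finset.centerMass_eq_of_sum_1 _ _ hw1, Finset.sum_apply]
      simp [smul_eq_mul]
    have hmass : ∀ S : Set Ω, mass p S = ∑ q ∈ univ.image t, w q * mass q S := by
      intro S
      unfold mass
      have key : ∀ x, (if x ∈ S then p x else 0)
          = ∑ q ∈ univ.image t, w q * (if x ∈ S then q x else 0) := by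
        intro x; by_cases hx : x ∈ S <;> simp [hx, hp' x]
      rw [Finset.sum_congr rfl (fun x _ => key x), Finset.sum_comm]
      exact Finset.sum_congr rfl (fun q _ => (Finset.mul_sum _ _ _).symm)
    intro E ω₀
    rw [hmass (E ∩ part ω₀), hmass (part ω₀), Finset.mul_sum]
    apply Finset.sum_congr rfl
    intro q hq
    obtain ⟨ω, -, rfl⟩ := mem_image.1 hq
    rw [point_lemma hT ω ω₀ E]
    ring
end

section
/- Given a single player information structure (Ω,Π,t) on a finite state space and a probability distribution p ∈ Δ(Ω), exactly one of the following holds: (1) p is (Π,t)-disintegrable; (2) p is a money pump, i.e., there exists f : Ω → ℝ with ∫ f dt(ω) ≥ 0 for all ω ∈ Ω but ∫ f dp < 0. -/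
open Finset

variable {Ω : Type*} [Fintype Ω]

set_option linter.unusedSectionVars false

lemma expect_neg (q f : Ω → ℝ) : _root_.expect q (fun ω => -(f ω)) = -_root_.expect q f := by
  simp [_root_.expect, mul_neg, Finset.sum_neg_distrib]

lemma part_mem_symm {part : Ω → Set Ω} (hp : IsPartitionMap part) {ω ω' : Ω}
    (h : ω' ∈ part ω) : ω ∈ part ω' := by
  rw [hp.2 ω ω' h]; exact hp.1 ω

lemma t_supp {part : Ω → Set Ω} {t : Ω → Ω → ℝ} (hT : InfoStructure1 part t)
    {ω ω' : Ω} (h : ω' ∉ part ω) : t ω ω' = 0 := by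
  classical
  obtain ⟨hpart, hprob, hmass, hconst⟩ := hT
  have h1 : ∑ x, t ω x = 1 := (hprob ω).2
  have h2 : mass (t ω) (part ω) = 1 := hmass ω
  unfold mass at h2
  have h3 : ∑ x, (t ω x - if x ∈ part ω then t ω x else 0) = 0 := by
    rw [Finset.sum_sub_distrib, h1, h2]; ring
  have h4 := (Finset.sum_eq_zero_iff_of_nonneg ?_).mp h3 ω' (Finset.mem_univ _)
  · simpa [h] using h4
  · intro x _
    by_cases hx : x ∈ part ω <;> simp [hx, (hprob ω).1 x]

lemma mass_inter_supp {part : Ω → Set Ω} {t : Ω → Ω → ℝ} (hT : InfoStructure1 part t)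
    (E : Set Ω) (ω : Ω) : mass (t ω) (E ∩ part ω) = mass (t ω) E := by
  classical
  unfold mass
  refine Finset.sum_congr rfl fun x _ => ?_
  by_cases hx : x ∈ part ω
  · by_cases hE : x ∈ E <;> simp [hx, hE]
  · simp [hx, t_supp hT hx]

lemma disint_expect_eq {part : Ω → Set Ω} {t : Ω → Ω → ℝ} {p : Ω → ℝ}
    (hT : InfoStructure1 part t) (hd : Disintegrable part t p) (f : Ω → ℝ) :
    _root_.expect p f = ∑ ω, p ω * _root_.expect (t ω) f := by
  classical
  have key : ∀ ω', ∑ ω, p ω * t ω ω' = p ω' := by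
    intro ω'
    have step : ∀ ω, p ω * t ω ω' = (if ω ∈ part ω' then p ω else 0) * t ω' ω' := by
      intro ω
      by_cases h : ω ∈ part ω'
      · rw [hT.2.2.2 ω' ω h]; simp [h]
      · have h' : ω' ∉ part ω := fun h'' => h (part_mem_symm hT.1 h'')
        rw [t_supp hT h']; simp [h]
    have hsc := Finset.sum_congr (rfl : (Finset.univ : Finset Ω) = Finset.univ)
      (fun ω _ => step ω)
    rw [hsc, ← Finset.sum_mul]
    have hd' := hd {ω'} ω'
    have e1 : mass p ({ω'} ∩ part ω') = p ω' := by
      unfold mass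
      rw [Finset.sum_eq_single_of_mem ω' (Finset.mem_univ ω')]
      · simp [hT.1.1 ω']
      · intro b _ hb
        simp [Set.mem_inter_iff, hb]
    have e2 : mass (t ω') ({ω'} : Set Ω) = t ω' ω' := by
      unfold mass
      rw [Finset.sum_eq_single_of_mem ω' (Finset.mem_univ ω')]
      · simp
      · intro b _ hb
        simp [hb]
    rw [e1, e2] at hd'
    have e3 : (∑ ω, if ω ∈ part ω' then p ω else 0) = mass p (part ω') := by
      unfold mass
      exact Finset.sum_congr rfl fun ω _ => by
        by_cases h : ω ∈ part ω' <;> simp [h]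
    rw [e3]
    linarith [hd']
  unfold _root_.expect
  have step2 : ∀ ω, p ω * ∑ ω', t ω ω' * f ω' = ∑ ω', p ω * t ω ω' * f ω' := by
    intro ω; rw [Finset.mul_sum]; exact Finset.sum_congr rfl fun ω' _ => by ring
  have hsc := Finset.sum_congr (rfl : (Finset.univ : Finset Ω) = Finset.univ)
    (fun ω _ => step2 ω)
  rw [hsc, Finset.sum_comm]
  refine Finset.sum_congr rfl fun ω' _ => ?_
  rw [← Finset.sum_mul, key ω']

/-- exactly one of the following holds: `p` is disintegrable, or
`p` is a money pump. -/
theorem disintegrable_xor_moneyPump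
    (part : Ω → Set Ω) (t : Ω → Ω → ℝ) (p : Ω → ℝ)
    (hT : InfoStructure1 part t) (hp : IsProbDist p) :
    Xor' (Disintegrable part t p) (MoneyPump1 t p) := by
  classical
  obtain ⟨hpart, hprob, hmassc, hconst⟩ := hT
  have hTfull : InfoStructure1 part t := ⟨hpart, hprob, hmassc, hconst⟩
  by_cases hd : Disintegrable part t p
  · left
    refine ⟨hd, ?_⟩
    rintro ⟨f, hsf, hneg⟩
    have heq := disint_expect_eq hTfull hd f
    have hnn : 0 ≤ ∑ ω, p ω * _root_.expect (t ω) f :=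
      Finset.sum_nonneg fun ω _ => mul_nonneg (hp.1 ω) (hsf ω)
    linarith
  · right
    refine ⟨?_, hd⟩
    unfold Disintegrable at hd
    push_neg at hd
    obtain ⟨E, ω0, hne⟩ := hd
    set π0 := part ω0 with hπ0
    set c := mass (t ω0) E with hc
    set f0 : Ω → ℝ := fun ω =>
      (if ω ∈ E ∩ π0 then (1:ℝ) else 0) - c * (if ω ∈ π0 then (1:ℝ) else 0) with hf0
    have hexp : ∀ q : Ω → ℝ, _root_.expect q f0 = mass q (E ∩ π0) - c * mass q π0 := by
      intro q
      unfold _root_.expect mass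
      have step : ∀ ω, q ω * f0 ω
          = (if ω ∈ E ∩ π0 then q ω else 0) - c * (if ω ∈ π0 then q ω else 0) := by
        intro ω
        rw [hf0]
        by_cases h1 : ω ∈ E ∩ π0 <;> by_cases h2 : ω ∈ π0 <;> simp [h1, h2] <;> ring
      have hsc := Finset.sum_congr (rfl : (Finset.univ : Finset Ω) = Finset.univ)
        (fun ω _ => step ω)
      rw [hsc, Finset.sum_sub_distrib, ← Finset.mul_sum]
      have g1 : (∑ x, if x ∈ E ∩ π0 then q x else 0) = mass q (E ∩ π0) := by
        unfold mass
        exact Finset.sum_congr rfl fun x _ => by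
          by_cases h : x ∈ E ∩ π0 <;> simp [h]
      have g2 : (∑ x, if x ∈ π0 then q x else 0) = mass q π0 := by
        unfold mass
        exact Finset.sum_congr rfl fun x _ => by
          by_cases h : x ∈ π0 <;> simp [h]
      rw [g1, g2]
      congr 1
    have hst : ∀ ω, _root_.expect (t ω) f0 = 0 := by
      intro ω
      rw [hexp]
      by_cases h : ω ∈ π0
      · rw [hconst ω0 ω h]
        have h1 : mass (t ω0) (E ∩ π0) = c := mass_inter_supp hTfull E ω0
        have h2 : mass (t ω0) π0 = 1 := hmassc ω0
        rw [h1, h2]; ring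
      · have hz : ∀ x, x ∈ π0 → t ω x = 0 := by
          intro x hx
          refine t_supp hTfull fun hx' : x ∈ part ω => ?_
          have e1 := hpart.2 ω x hx'
          have e2 := hpart.2 ω0 x hx
          exact h (show ω ∈ π0 by rw [hπ0, ← e2, e1]; exact hpart.1 ω)
        have m1 : mass (t ω) (E ∩ π0) = 0 := by
          unfold mass
          refine Finset.sum_eq_zero fun x _ => ?_
          by_cases hx : x ∈ E ∩ π0
          · simp [hx, hz x hx.2]
          · simp [hx]
        have m2 : mass (t ω) π0 = 0 := by
          unfold mass
          refine Finset.sum_eq_zero fun x _ => ?_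
          by_cases hx : x ∈ π0
          · simp [hx, hz x hx]
          · simp [hx]
        rw [m1, m2]; ring
    have hD : _root_.expect p f0 = mass p (E ∩ π0) - c * mass p π0 := hexp p
    have hDne : _root_.expect p f0 ≠ 0 := by
      rw [hD]; intro h; exact hne (by linarith)
    rcases lt_or_gt_of_ne hDne with hlt | hgt
    · exact ⟨f0, fun ω => le_of_eq (hst ω).symm, hlt⟩
    · refine ⟨fun ω => -(f0 ω), fun ω => ?_, ?_⟩
      · rw [expect_neg, hst ω]; simp
      · rw [expect_neg]; linarith
end

section
/- A finite multiplayer information structure attains a common prior if and only if there exists a common certainty component S ⊆ Ω such that the induced information structure on S attains a common prior. -/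
open Finset

variable {Ω : Type*} [Fintype Ω]

variable {N : Type*} [Fintype N]

/-- A multiplayer information structure: each player's partition and type
function form a single player information structure. -/
def InfoStructure (part : N → Ω → Set Ω) (t : N → Ω → Ω → ℝ) : Prop :=
  ∀ i, InfoStructure1 (part i) (t i)

/-- A common certainty component: a nonempty `S` such that at each `ω ∈ S`
every player assigns probability one to some event contained in `S`. -/
def CCC (t : N → Ω → Ω → ℝ) (S : Set Ω) : Prop :=
  S.Nonempty ∧ ∀ ω ∈ S, ∀ i, ∃ E ⊆ S, mass (t i ω) E = 1

/-- The event `E` is commonly certain at state `ω`. -/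
def CommonlyCertainAt (t : N → Ω → Ω → ℝ) (E : Set Ω) (ω : Ω) : Prop :=
  ∃ S : Set Ω, CCC t S ∧ ω ∈ S ∧ S ⊆ E

/-- A common prior: a probability distribution that is a prior (i.e.
disintegrable) for every player. -/
def CommonPrior (part : N → Ω → Set Ω) (t : N → Ω → Ω → ℝ) (p : Ω → ℝ) : Prop :=
  IsProbDist p ∧ ∀ i, Disintegrable (part i) (t i) p

/-- A universal common prior: a common prior giving positive probability to
every common certainty component. -/
def UniversalCommonPrior (part : N → Ω → Set Ω) (t : N → Ω → Ω → ℝ) (p : Ω → ℝ) : Prop :=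
  CommonPrior part t p ∧ ∀ S : Set Ω, CCC t S → 0 < mass p S

/-- A strong common prior: a common prior giving positive probability to every
partition cell of every player. -/
def StrongCommonPrior (part : N → Ω → Set Ω) (t : N → Ω → Ω → ℝ) (p : Ω → ℝ) : Prop :=
  CommonPrior part t p ∧ ∀ i ω, 0 < mass p (part i ω)

/-- A trade: the payoffs sum to at most zero at every state. -/
def Trade (f : N → Ω → ℝ) : Prop := ∀ ω, ∑ i, f i ω ≤ 0

/-- An agreeable trade: at every state each player expects a positive gain. -/
def Agreeable (t : N → Ω → Ω → ℝ) (f : N → Ω → ℝ) : Prop :=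
  Trade f ∧ ∀ ω i, 0 < expect (t i ω) (f i)

/-- A weakly agreeable trade: at some state it is commonly certain that every
player expects a positive gain. -/
def WeaklyAgreeable (t : N → Ω → Ω → ℝ) (f : N → Ω → ℝ) : Prop :=
  Trade f ∧ ∃ ω, CommonlyCertainAt t {ω' | ∀ i, 0 < expect (t i ω') (f i)} ω

/-- An acceptable trade: at every state it is commonly certain that no player
expects a loss, and some player expects a strict gain at some state. -/
def Acceptable (t : N → Ω → Ω → ℝ) (f : N → Ω → ℝ) : Prop :=
  Trade f ∧ (∀ ω, CommonlyCertainAt t {ω' | ∀ i, 0 ≤ expect (t i ω') (f i)} ω) ∧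
    ∃ ω i, 0 < expect (t i ω) (f i)

/-- A multiplayer semi-trade: at every state it is commonly certain that no
player expects a loss. -/
def MSemiTrade (t : N → Ω → Ω → ℝ) (f : N → Ω → ℝ) : Prop :=
  ∀ ω, CommonlyCertainAt t {ω' | ∀ i, 0 ≤ expect (t i ω') (f i)} ω

/-- `p` is a multiplayer money pump: some semi-trade has negative total
expectation under `p`. -/
def MMoneyPump (t : N → Ω → Ω → ℝ) (p : Ω → ℝ) : Prop :=
  ∃ f : N → Ω → ℝ, MSemiTrade t f ∧ expect p (fun ω => ∑ i, f i ω) < 0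

/-- `p` is maximal: it assigns positive probability to every common certainty
component. -/
def IsMaximalDist (t : N → Ω → Ω → ℝ) (p : Ω → ℝ) : Prop :=
  ∀ S : Set Ω, CCC t S → 0 < mass p S

/-- A common prior for the information structure induced on a common certainty
component `S`: a distribution supported and normalised on `S` satisfying the
prior (disintegrability) condition for the restricted partitions and types. -/
def InducedCommonPrior (part : N → Ω → Set Ω) (t : N → Ω → Ω → ℝ)
    (S : Set Ω) (pS : Ω → ℝ) : Prop :=
  (∀ ω, 0 ≤ pS ω) ∧ (∀ ω, ω ∉ S → pS ω = 0) ∧ mass pS S = 1 ∧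
    ∀ i, ∀ E ⊆ S, ∀ ω ∈ S,
      mass pS (E ∩ (part i ω ∩ S)) = mass (t i ω) E * mass pS (part i ω ∩ S)

section Helpers
variable {Ω : Type*} [Fintype Ω]

open Classical in
lemma mass_nonneg' {p : Ω → ℝ} (hp : ∀ ω, 0 ≤ p ω) (E : Set Ω) : 0 ≤ mass p E :=
  Finset.sum_nonneg fun ω _ => by split_ifs; exacts [hp ω, le_refl 0]

open Classical in
lemma mass_mono' {p : Ω → ℝ} (hp : ∀ ω, 0 ≤ p ω) {A B : Set Ω} (h : A ⊆ B) :
    mass p A ≤ mass p B := by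
  refine Finset.sum_le_sum fun ω _ => ?_
  by_cases hA : ω ∈ A
  · simp [hA, h hA]
  · simp only [hA, if_false]
    split_ifs; exacts [hp ω, le_refl 0]

open Classical in
lemma mass_split' (p : Ω → ℝ) (E S : Set Ω) :
    mass p E = mass p (E ∩ S) + mass p (E ∩ Sᶜ) := by
  unfold mass
  rw [← Finset.sum_add_distrib]
  refine Finset.sum_congr rfl fun ω _ => ?_
  by_cases hE : ω ∈ E <;> by_cases hS : ω ∈ S <;> simp [hE, hS]

open Classical in
lemma mass_univ' (p : Ω → ℝ) : mass p Set.univ = ∑ ω, p ω := by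
  unfold mass; simp

open Classical in
lemma mass_eq_of_zero_off {p : Ω → ℝ} {S : Set Ω} (h0 : ∀ ω, ω ∉ S → p ω = 0)
    (E : Set Ω) : mass p E = mass p (E ∩ S) := by
  unfold mass
  refine Finset.sum_congr rfl fun ω _ => ?_
  by_cases hE : ω ∈ E <;> by_cases hS : ω ∈ S <;> simp [hE, hS, h0 ω]

open Classical in
lemma mass_zero_on {p : Ω → ℝ} {A : Set Ω} (h : ∀ ω ∈ A, p ω = 0) : mass p A = 0 := by
  refine Finset.sum_eq_zero fun ω _ => ?_
  by_cases hA : ω ∈ A <;> simp [hA, h]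

open Classical in
lemma mass_singleton' (p : Ω → ℝ) (ω : Ω) : mass p {ω} = p ω := by
  unfold mass
  rw [Finset.sum_eq_single_of_mem ω (Finset.mem_univ ω)]
  · simp
  · intro b _ hb; simp [hb]

lemma mass_compl_eq_zero {q : Ω → ℝ} (hq : IsProbDist q) {E S : Set Ω}
    (hES : E ⊆ S) (hE : mass q E = 1) : mass q Sᶜ = 0 := by
  have h1 : mass q Set.univ = 1 := by rw [mass_univ']; exact hq.2
  have h2 := mass_split' q Set.univ E
  simp only [Set.univ_inter] at h2
  have h3 : mass q Sᶜ ≤ mass q Eᶜ := mass_mono' hq.1 (Set.compl_subset_compl.mpr hES)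
  have h4 := mass_nonneg' hq.1 Sᶜ
  linarith

lemma mass_inter_eq {q : Ω → ℝ} (hq : ∀ ω, 0 ≤ q ω) {S : Set Ω}
    (hS : mass q Sᶜ = 0) (E : Set Ω) : mass q (E ∩ S) = mass q E := by
  have h := mass_split' q E S
  have h1 : mass q (E ∩ Sᶜ) ≤ mass q Sᶜ := mass_mono' hq Set.inter_subset_right
  have h2 := mass_nonneg' hq (E ∩ Sᶜ)
  linarith

end Helpers

/-- an information structure attains a common prior iff some
common certainty component's induced structure attains a common prior. -/
theorem commonPrior_iff_exists_ccc (part : N → Ω → Set Ω) (t : N → Ω → Ω → ℝ)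
    (hT : InfoStructure part t) :
    (∃ p : Ω → ℝ, CommonPrior part t p) ↔
      ∃ S : Set Ω, CCC t S ∧ ∃ pS : Ω → ℝ, InducedCommonPrior part t S pS := by
  constructor
  · rintro ⟨p, ⟨hpd, hdis⟩⟩
    set S : Set Ω := {ω | p ω ≠ 0} with hSdef
    have hoff : ∀ ω, ω ∉ S → p ω = 0 := fun ω h => by
      by_contra hc; exact h hc
    have hScompl0 : mass p Sᶜ = 0 := mass_zero_on (fun ω hω => hoff ω hω)
    have hSmass : mass p S = 1 := by
      have h1 : mass p Set.univ = 1 := by rw [mass_univ']; exact hpd.2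
      have h2 := mass_split' p Set.univ S
      simp only [Set.univ_inter] at h2
      linarith
    have hSne : S.Nonempty := by
      by_contra hc
      rw [Set.not_nonempty_iff_eq_empty] at hc
      have : (1:ℝ) = 0 := by
        rw [← hSmass, hc]; exact mass_zero_on (fun ω hω => absurd hω (Set.notMem_empty ω))
      norm_num at this
    -- key: for ω ∈ S and each i, t i ω assigns mass 1 to S
    have hkey : ∀ ω ∈ S, ∀ i, mass (t i ω) S = 1 := by
      intro ω hω i
      have hpos : 0 < mass p (part i ω) := by
        have h1 : p ω ≤ mass p (part i ω) := by
          rw [← mass_singleton' p ω]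
          exact mass_mono' hpd.1 (by
            intro x hx; rw [Set.mem_singleton_iff] at hx; rw [hx]
            exact (hT i).1.1 ω)
        have := hpd.1 ω
        have hne : p ω ≠ 0 := hω
        have : 0 < p ω := lt_of_le_of_ne this (Ne.symm hne)
        linarith
      have hd := hdis i Sᶜ ω
      have hLHS : mass p (Sᶜ ∩ part i ω) = 0 :=
        mass_zero_on (fun x hx => hoff x hx.1)
      have ht0 : mass (t i ω) Sᶜ = 0 := by
        rw [hLHS] at hd
        rcases mul_eq_zero.mp hd.symm with h | h
        · exact h
        · linarith
      have h1 : mass (t i ω) Set.univ = 1 := by rw [mass_univ']; exact ((hT i).2.1 ω).2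
      have h2 := mass_split' (t i ω) Set.univ S
      simp only [Set.univ_inter] at h2
      linarith
    refine ⟨S, ⟨hSne, fun ω hω i => ⟨S, le_refl S, hkey ω hω i⟩⟩, p, hpd.1, hoff, hSmass, ?_⟩
    intro i E hE ω hω
    have h1 : E ∩ (part i ω ∩ S) = E ∩ part i ω := by
      ext x; constructor
      · rintro ⟨hx1, hx2, _⟩; exact ⟨hx1, hx2⟩
      · rintro ⟨hx1, hx2⟩; exact ⟨hx1, hx2, hE hx1⟩
    have h2 : mass p (part i ω ∩ S) = mass p (part i ω) :=
      (mass_eq_of_zero_off hoff (part i ω)).symm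
    rw [h1, h2]
    exact hdis i E ω
  · rintro ⟨S, ⟨hSne, hccc⟩, pS, hnn, hoff, hSmass, hind⟩
    refine ⟨pS, ⟨⟨hnn, ?_⟩, ?_⟩⟩
    · rw [← mass_univ' pS, mass_eq_of_zero_off hoff Set.univ, Set.univ_inter]
      exact hSmass
    · intro i E ω
      by_cases hcase : ∀ ω' ∈ part i ω, pS ω' = 0
      · have hL : mass pS (E ∩ part i ω) = 0 :=
          mass_zero_on (fun x hx => hcase x hx.2)
        have hR : mass pS (part i ω) = 0 := mass_zero_on hcase
        rw [hL, hR, mul_zero]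
      · push_neg at hcase
        obtain ⟨ω₀, hω₀mem, hω₀ne⟩ := hcase
        have hω₀S : ω₀ ∈ S := by
          by_contra hc; exact hω₀ne (hoff ω₀ hc)
        have hpartEq : part i ω₀ = part i ω := (hT i).1.2 ω ω₀ hω₀mem
        have htEq : t i ω₀ = t i ω := (hT i).2.2.2 ω ω₀ hω₀mem
        obtain ⟨E', hE'S, hE'1⟩ := hccc ω₀ hω₀S i
        have htS : mass (t i ω₀) Sᶜ = 0 :=
          mass_compl_eq_zero ((hT i).2.1 ω₀) hE'S hE'1
        have hstep := hind i (E ∩ S) Set.inter_subset_right ω₀ hω₀S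
        rw [hpartEq] at hstep
        have hs1 : (E ∩ S) ∩ (part i ω ∩ S) = (E ∩ part i ω) ∩ S := by
          ext x; constructor
          · rintro ⟨⟨h1, h2⟩, h3, _⟩; exact ⟨⟨h1, h3⟩, h2⟩
          · rintro ⟨⟨h1, h3⟩, h2⟩; exact ⟨⟨h1, h2⟩, h3, h2⟩
        rw [hs1] at hstep
        have hs2 : mass pS ((E ∩ part i ω) ∩ S) = mass pS (E ∩ part i ω) :=
          (mass_eq_of_zero_off hoff (E ∩ part i ω)).symm
        have hs3 : mass pS (part i ω ∩ S) = mass pS (part i ω) :=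
          (mass_eq_of_zero_off hoff (part i ω)).symm
        have hs4 : mass (t i ω₀) (E ∩ S) = mass (t i ω₀) E :=
          mass_inter_eq ((hT i).2.1 ω₀).1 htS E
        rw [hs2, hs3, hs4, htEq] at hstep
        exact hstep
end

section
/- If S is a common certainty component and p_S is a common prior for the induced information structure on S, then the extension p defined by p(E) = p_S(E ∩ S) is a common prior for the original information structure on Ω. -/
open Finset

variable {Ω : Type*} [Fintype Ω]

variable {N : Type*} [Fintype N]

open Classical in
lemma mass_indicator_eq (S : Set Ω) (pS : Ω → ℝ) (A : Set Ω) :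
    mass (S.indicator pS) A = mass pS (A ∩ S) := by
  unfold mass
  apply Finset.sum_congr rfl
  intro ω _
  by_cases hA : ω ∈ A <;> by_cases hSω : ω ∈ S <;>
    simp [hA, hSω, Set.indicator_of_mem, Set.indicator_of_notMem]

open Classical in
lemma eq_zero_of_not_mem {q : Ω → ℝ} (hq : IsProbDist q) {F : Set Ω}
    (hF : mass q F = 1) : ∀ ω ∉ F, q ω = 0 := by
  have key : ∑ x, (if x ∈ F then (0:ℝ) else q x) = 0 := by
    have h1 : ∑ x, q x =
        ∑ x, ((if x ∈ F then q x else 0) + (if x ∈ F then (0:ℝ) else q x)) := by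
      apply Finset.sum_congr rfl; intro x _; split <;> simp
    rw [Finset.sum_add_distrib] at h1
    have h2 : ∑ x, (if x ∈ F then q x else 0) = mass q F := rfl
    rw [h2, hF, hq.2] at h1
    linarith
  intro ω hω
  have := (Finset.sum_eq_zero_iff_of_nonneg (by
    intro x _; split
    · exact le_refl 0
    · exact hq.1 x)).mp key ω (Finset.mem_univ ω)
  simpa [hω] using this

open Classical in
lemma mass_inter_self_s10 {q : Ω → ℝ} (hq : IsProbDist q) {F S : Set Ω}
    (hFS : F ⊆ S) (hF : mass q F = 1) (E : Set Ω) :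
    mass q E = mass q (E ∩ S) := by
  unfold mass
  apply Finset.sum_congr rfl
  intro ω _
  by_cases hE : ω ∈ E
  · by_cases hSω : ω ∈ S
    · simp [hE, hSω]
    · have : ω ∉ F := fun h => hSω (hFS h)
      simp [hE, hSω, eq_zero_of_not_mem hq hF ω this]
  · simp [hE]

/-- extending a common prior of the induced structure on a common
certainty component by zero yields a common prior of the original structure. -/
theorem extension_commonPrior (part : N → Ω → Set Ω) (t : N → Ω → Ω → ℝ)
    (hT : InfoStructure part t) (S : Set Ω) (hS : CCC t S)
    (pS : Ω → ℝ) (hpS : InducedCommonPrior part t S pS) :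
    CommonPrior part t (S.indicator pS) := by
  obtain ⟨hSne, hCCC⟩ := hS
  obtain ⟨hpos, hzero, hnorm, hdis⟩ := hpS
  constructor
  · constructor
    · exact fun ω => Set.indicator_nonneg (fun ω _ => hpos ω) ω
    · have h := mass_indicator_eq S pS Set.univ
      have h2 : mass (S.indicator pS) Set.univ = ∑ ω, S.indicator pS ω := by
        unfold mass; simp
      rw [h2] at h
      rw [h, Set.univ_inter, hnorm]
  · intro i E ω
    obtain ⟨⟨hmem, hcell⟩, hprob, hmass1, hconst⟩ := hT i
    have key : ∀ ω' ∈ S,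
        mass (S.indicator pS) (E ∩ part i ω') =
          mass (t i ω') E * mass (S.indicator pS) (part i ω') := by
      intro ω' hω'
      obtain ⟨F, hFS, hF1⟩ := hCCC ω' hω' i
      have hE : mass (t i ω') E = mass (t i ω') (E ∩ S) :=
        mass_inter_self_s10 (hprob ω') hFS hF1 E
      have hd := hdis i (E ∩ S) Set.inter_subset_right ω' hω'
      rw [mass_indicator_eq, mass_indicator_eq]
      have hset : (E ∩ S) ∩ (part i ω' ∩ S) = (E ∩ part i ω') ∩ S := by
        ext x; simp only [Set.mem_inter_iff]; tauto
      rw [hset] at hd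
      rw [hd, hE]
    by_cases hωS : ω ∈ S
    · exact key ω hωS
    · by_cases hne : (part i ω ∩ S).Nonempty
      · obtain ⟨ω', hω'π, hω'S⟩ := hne
        have hπ : part i ω' = part i ω := hcell ω ω' hω'π
        have ht : t i ω' = t i ω := hconst ω ω' hω'π
        rw [← hπ, ← ht]
        exact key ω' hω'S
      · have hempty : part i ω ∩ S = ∅ := Set.not_nonempty_iff_eq_empty.mp hne
        rw [mass_indicator_eq, mass_indicator_eq]
        have h1 : (E ∩ part i ω) ∩ S = ∅ := by
          rw [Set.inter_assoc, hempty, Set.inter_empty]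
        rw [h1, hempty]
        have : mass pS (∅ : Set Ω) = 0 := by unfold mass; simp
        rw [this, mul_zero]
end

section
/- In the two-player information structure with Ω = {ω₁,ω₂,ω₃,ω₄}, Π₁ = {{ω₁,ω₂},{ω₃,ω₄}}, Π₂ = {{ω₁,ω₄},{ω₂,ω₃}}, t₁ uniform on each element of Π₁, and t₂ uniform on each element of Π₂, there exists no acceptable trade, while p = (1/4,1/4,1/4,1/4) is a strong common prior. -/
open Finset

variable {Ω : Type*} [Fintype Ω]

variable {N : Type*} [Fintype N]

set_option maxHeartbeats 1000000 in
/-- in the concrete two-player structure with `Π₁ = {{0,1},{2,3}}`,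
`Π₂ = {{0,3},{1,2}}` and uniform types on each cell, there is no acceptable
trade, while the uniform distribution is a strong common prior. -/
theorem no_acceptable_trade_example :
    ∃ (part : Fin 2 → Fin 4 → Set (Fin 4)) (t : Fin 2 → Fin 4 → Fin 4 → ℝ),
      part = (fun i ω =>
        if i = 0 then (if ω.val < 2 then ({0, 1} : Set (Fin 4)) else {2, 3})
        else (if ω = 0 ∨ ω = 3 then ({0, 3} : Set (Fin 4)) else {1, 2})) ∧
      t = (fun i ω ω' =>
        if i = 0 then
          (if ω.val < 2 then (if ω'.val < 2 then (1 : ℝ) / 2 else 0)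
            else (if ω'.val < 2 then 0 else 1 / 2))
        else
          (if ω = 0 ∨ ω = 3 then (if ω' = 0 ∨ ω' = 3 then (1 : ℝ) / 2 else 0)
            else (if ω' = 0 ∨ ω' = 3 then 0 else 1 / 2))) ∧
      InfoStructure part t ∧
      (¬ ∃ f : Fin 2 → Fin 4 → ℝ, Acceptable t f) ∧
      StrongCommonPrior part t (fun _ => 1 / 4) := by
  refine ⟨_, _, rfl, rfl, ?_, ?_, ?_⟩
  · -- InfoStructure
    intro i
    fin_cases i <;> refine ⟨⟨?_, ?_⟩, ?_, ?_, ?_⟩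
    · intro ω; fin_cases ω <;> simp +decide
    · intro ω ω' h; fin_cases ω <;> fin_cases ω' <;> simp_all +decide
    · intro ω
      refine ⟨fun ω' => ?_, ?_⟩
      · fin_cases ω <;> fin_cases ω' <;> (simp +decide; try norm_num)
      · fin_cases ω <;> (simp +decide [Fin.sum_univ_four]; try norm_num)
    · intro ω
      fin_cases ω <;>
        (simp +decide [mass, Fin.sum_univ_four, Set.mem_insert_iff, Set.mem_singleton_iff];
          try norm_num)
    · intro ω ω' h; fin_cases ω <;> fin_cases ω' <;> simp_all +decide
    · intro ω; fin_cases ω <;> simp +decide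
    · intro ω ω' h; fin_cases ω <;> fin_cases ω' <;> simp_all +decide
    · intro ω
      refine ⟨fun ω' => ?_, ?_⟩
      · fin_cases ω <;> fin_cases ω' <;> (simp +decide; try norm_num)
      · fin_cases ω <;> (simp +decide [Fin.sum_univ_four]; try norm_num)
    · intro ω
      fin_cases ω <;>
        (simp +decide [mass, Fin.sum_univ_four, Set.mem_insert_iff, Set.mem_singleton_iff];
          try norm_num)
    · intro ω ω' h; fin_cases ω <;> fin_cases ω' <;> simp_all +decide
  · -- no acceptable trade
    rintro ⟨f, htr, hcc, ω, i, hpos⟩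
    have hnn : ∀ (ω : Fin 4) (i : Fin 2), 0 ≤ _root_.expect
        ((fun i ω ω' =>
          if i = 0 then
            (if ω.val < 2 then (if ω'.val < 2 then (1 : ℝ) / 2 else 0)
              else (if ω'.val < 2 then 0 else 1 / 2))
          else
            (if ω = 0 ∨ ω = 3 then (if ω' = 0 ∨ ω' = 3 then (1 : ℝ) / 2 else 0)
              else (if ω' = 0 ∨ ω' = 3 then 0 else 1 / 2))) i ω) (f i) := by
      intro ω i
      obtain ⟨S, hS, hωS, hsub⟩ := hcc ω
      exact hsub hωS i
    have A := hnn 0 0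
    have B := hnn 2 0
    have C := hnn 0 1
    have D := hnn 1 1
    have T0 := htr 0
    have T1 := htr 1
    have T2 := htr 2
    have T3 := htr 3
    simp +decide [_root_.expect, Fin.sum_univ_four, Fin.sum_univ_two] at A B C D T0 T1 T2 T3
    fin_cases ω <;> fin_cases i <;>
      simp +decide [_root_.expect, Fin.sum_univ_four] at hpos <;> linarith
  · -- strong common prior
    refine ⟨⟨⟨fun _ => by norm_num, by norm_num [Fin.sum_univ_four]⟩, ?_⟩, ?_⟩
    · intro i E ω
      by_cases h0 : (0 : Fin 4) ∈ E <;> by_cases h1 : (1 : Fin 4) ∈ E <;>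
        by_cases h2 : (2 : Fin 4) ∈ E <;> by_cases h3 : (3 : Fin 4) ∈ E <;>
        fin_cases i <;> fin_cases ω <;>
        (simp +decide [mass, Fin.sum_univ_four, Set.mem_inter_iff,
          Set.mem_insert_iff, Set.mem_singleton_iff, h0, h1, h2, h3]; try norm_num)
    · intro i ω
      fin_cases i <;> fin_cases ω <;>
        (simp +decide [mass, Fin.sum_univ_four, Set.mem_insert_iff, Set.mem_singleton_iff];
          try norm_num)
end

section
/- Let p be a maximal probability distribution for a finite information structure (p(S) > 0 for every common certainty component S). Then exactly one of the following holds: p is a universal common prior, or p is a universal multiplayer money pump. -/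
open Finset

variable {Ω : Type*} [Fintype Ω]

variable {N : Type*} [Fintype N]

section Helpers

open Classical

variable {part : Ω → Set Ω} {t : Ω → Ω → ℝ} {p : Ω → ℝ}

open Classical in
lemma mass_def (p : Ω → ℝ) (E : Set Ω) : mass p E = ∑ ω, if ω ∈ E then p ω else 0 := rfl

lemma expect_def (q f : Ω → ℝ) : expect q f = ∑ ω, q ω * f ω := rfl

lemma t_zero_outside (h1 : InfoStructure1 part t) (ω ω' : Ω) (hω' : ω' ∉ part ω) :
    t ω ω' = 0 := by
  classical
  have hsum : ∑ x, t ω x = 1 := (h1.2.1 ω).2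
  have hmass : ∑ x, (if x ∈ part ω then t ω x else 0) = 1 := h1.2.2.1 ω
  have hzero : ∑ x, (t ω x - (if x ∈ part ω then t ω x else 0)) = 0 := by
    rw [Finset.sum_sub_distrib, hsum, hmass, sub_self]
  have hnn : ∀ x ∈ Finset.univ, 0 ≤ t ω x - (if x ∈ part ω then t ω x else 0) := by
    intro x _
    split_ifs with h
    · simp
    · simpa using (h1.2.1 ω).1 x
  have := (Finset.sum_eq_zero_iff_of_nonneg hnn).1 hzero ω' (Finset.mem_univ ω')
  rw [if_neg hω'] at this
  linarith

lemma marginal (h1 : InfoStructure1 part t) (hd : Disintegrable part t p) (ω' : Ω) :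
    ∑ ω, p ω * t ω ω' = p ω' := by
  classical
  have hmem : ω' ∈ part ω' := h1.1.1 ω'
  have step : ∀ ω, p ω * t ω ω' = (if ω ∈ part ω' then p ω else 0) * t ω' ω' := by
    intro ω
    by_cases hω : ω ∈ part ω'
    · rw [if_pos hω, h1.2.2.2 ω' ω hω]
    · rw [if_neg hω, zero_mul]
      have hnm : ω' ∉ part ω := by
        intro hmem'
        exact hω ((h1.1.2 ω ω' hmem') ▸ h1.1.1 ω)
      rw [t_zero_outside h1 ω ω' hnm, mul_zero]
  rw [Finset.sum_congr rfl (fun ω _ => step ω), ← Finset.sum_mul]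
  have hd' := hd {ω'} ω'
  have e1 : mass p ({ω'} ∩ part ω') = p ω' := by
    rw [mass_def, Finset.sum_eq_single ω']
    · simp [hmem]
    · intro b _ hb
      simp only [Set.mem_inter_iff, Set.mem_singleton_iff]
      rw [if_neg (by tauto)]
    · simp
  have e2 : mass (t ω') {ω'} = t ω' ω' := by
    rw [mass_def, Finset.sum_eq_single ω']
    · simp
    · intro b _ hb
      rw [if_neg (by simpa using hb)]
    · simp
  rw [e1, e2] at hd'
  rw [← mass_def p (part ω'), mul_comm]
  exact hd'.symm

lemma expect_eq_sum (h1 : InfoStructure1 part t) (hd : Disintegrable part t p)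
    (g : Ω → ℝ) : expect p g = ∑ ω, p ω * expect (t ω) g := by
  simp only [expect_def, Finset.mul_sum]
  rw [Finset.sum_comm]
  apply Finset.sum_congr rfl
  intro ω' _
  calc p ω' * g ω' = (∑ ω, p ω * t ω ω') * g ω' := by rw [marginal h1 hd]
    _ = ∑ ω, p ω * (t ω ω' * g ω') := by
        rw [Finset.sum_mul]; exact Finset.sum_congr rfl fun ω _ => by ring

lemma expect_nonneg (h1 : InfoStructure1 part t) (hd : Disintegrable part t p)
    (hp0 : ∀ ω, 0 ≤ p ω) (g : Ω → ℝ) (hg : ∀ ω, 0 ≤ expect (t ω) g) :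
    0 ≤ expect p g := by
  rw [expect_eq_sum h1 hd]
  exact Finset.sum_nonneg fun ω _ => mul_nonneg (hp0 ω) (hg ω)

lemma exists_bad (h1 : InfoStructure1 part t) (hnd : ¬ Disintegrable part t p) :
    ∃ ω, p ω ≠ t ω ω * mass p (part ω) := by
  classical
  by_contra h
  push_neg at h
  apply hnd
  intro E ω
  rw [mass_def p (E ∩ part ω), mass_def (t ω) E, Finset.sum_mul]
  apply Finset.sum_congr rfl
  intro ω' _
  by_cases hm : ω' ∈ part ω
  · by_cases hE : ω' ∈ E
    · have hEq : ω' ∈ E ∩ part ω := ⟨hE, hm⟩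
      rw [if_pos hEq, if_pos hE, h ω', h1.2.2.2 ω ω' hm, h1.1.2 ω ω' hm]
    · have hne : ω' ∉ E ∩ part ω := fun hh => hE hh.1
      rw [if_neg hne, if_neg hE, zero_mul]
  · have hne : ω' ∉ E ∩ part ω := fun hh => hm hh.2
    rw [if_neg hne]
    by_cases hE : ω' ∈ E
    · rw [if_pos hE, t_zero_outside h1 ω ω' hm, zero_mul]
    · rw [if_neg hE, zero_mul]

open Classical in
lemma single_pump (h1 : InfoStructure1 part t) (hp : IsProbDist p)
    (hnd : ¬ Disintegrable part t p) :
    ∃ f : Ω → ℝ, (∀ ω, expect (t ω) f = 0) ∧ expect p f < 0 := by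
  obtain ⟨ω₁, hbad⟩ := exists_bad h1 hnd
  set π := part ω₁ with hπ
  set q := t ω₁ with hq
  set P := mass p π with hP
  have hmem1 : ω₁ ∈ π := h1.1.1 ω₁
  have hPnn : 0 ≤ P := by
    rw [hP, mass_def]
    apply Finset.sum_nonneg
    intro ω _
    split_ifs
    · exact hp.1 ω
    · exact le_rfl
  have hple : p ω₁ ≤ P := by
    rw [hP, mass_def]
    have := Finset.single_le_sum (f := fun ω => if ω ∈ π then p ω else 0)
      (fun ω _ => by by_cases h : ω ∈ π <;> simp [h, hp.1 ω]) (Finset.mem_univ ω₁)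
    simpa [hmem1] using this
  have hPpos : 0 < P := by
    rcases hPnn.lt_or_eq with h | h
    · exact h
    · exfalso
      apply hbad
      have hp1 : p ω₁ = 0 := le_antisymm (h ▸ hple) (hp.1 ω₁)
      rw [hp1, ← h, mul_zero]
  set r : Ω → ℝ := fun ω => (if ω ∈ π then p ω else 0) / P with hr
  set g : Ω → ℝ := fun ω => q ω - r ω with hg
  set c : ℝ := ∑ ω, q ω * g ω with hc
  have hq0 : ∀ ω, ω ∉ π → q ω = 0 := fun ω h => t_zero_outside h1 ω₁ ω h
  have hr0 : ∀ ω, ω ∉ π → r ω = 0 := fun ω h => by simp [hr, h]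
  have hg0 : ∀ ω, ω ∉ π → g ω = 0 := fun ω h => by simp [hg, hq0 ω h, hr0 ω h]
  have hqsum : ∑ ω, (if ω ∈ π then q ω else 0) = 1 := h1.2.2.1 ω₁
  have hrsum : ∑ ω, (if ω ∈ π then r ω else 0) = 1 := by
    have step : ∀ ω, (if ω ∈ π then r ω else 0) = (if ω ∈ π then p ω else 0) / P := by
      intro ω
      by_cases h : ω ∈ π <;> simp [hr, h]
    rw [Finset.sum_congr rfl (fun ω _ => step ω), ← Finset.sum_div, ← mass_def, ← hP,
      div_self hPpos.ne']
  have hexq : expect q (fun ω => if ω ∈ π then g ω - c else 0) = 0 := by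
    simp only [expect_def]
    have step : ∀ ω, q ω * (if ω ∈ π then g ω - c else 0)
        = q ω * g ω - (if ω ∈ π then q ω else 0) * c := by
      intro ω
      by_cases h : ω ∈ π
      · simp only [if_pos h]; ring
      · simp [h, hq0 ω h]
    rw [Finset.sum_congr rfl (fun ω _ => step ω), Finset.sum_sub_distrib, ← hc,
      ← Finset.sum_mul, hqsum, one_mul, sub_self]
  refine ⟨fun ω => if ω ∈ π then g ω - c else 0, ?_, ?_⟩
  · intro ω
    by_cases hω : ω ∈ π
    · have ht : t ω = q := h1.2.2.2 ω₁ ω hω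
      rw [ht]
      exact hexq
    · simp only [expect_def]
      apply Finset.sum_eq_zero
      intro ω' _
      by_cases h' : ω' ∈ π
      · have hne : ω' ∉ part ω := by
          intro hmem'
          apply hω
          have e1 : part ω' = part ω := h1.1.2 ω ω' hmem'
          have e2 : part ω' = π := h1.1.2 ω₁ ω' h'
          rw [hπ] at e2 ⊢
          rw [← e2, e1]
          exact h1.1.1 ω
        rw [t_zero_outside h1 ω ω' hne, zero_mul]
      · rw [if_neg h', mul_zero]
  · have key : ∀ ω, p ω * (if ω ∈ π then g ω - c else 0)
        = P * (r ω * g ω - (if ω ∈ π then r ω else 0) * c) := by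
      intro ω
      by_cases h : ω ∈ π
      · have hpr : P * r ω = p ω := by
          rw [hr]
          simp only [if_pos h]
          field_simp
      -- p ω = P * r ω
        simp only [if_pos h]
        calc p ω * (g ω - c) = (P * r ω) * (g ω - c) := by rw [hpr]
          _ = P * (r ω * g ω - r ω * c) := by ring
      · simp [h, hr0 ω h]
    simp only [expect_def]
    rw [Finset.sum_congr rfl (fun ω _ => key ω), ← Finset.mul_sum]
    have split1 : ∑ ω, (r ω * g ω - (if ω ∈ π then r ω else 0) * c)
        = ∑ ω, r ω * g ω - c := by
      rw [Finset.sum_sub_distrib, ← Finset.sum_mul, hrsum, one_mul]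
    rw [split1]
    have split2 : ∑ ω, r ω * g ω - c = ∑ ω, -(g ω * g ω) := by
      rw [hc, ← Finset.sum_sub_distrib]
      apply Finset.sum_congr rfl
      intro ω _
      have : g ω = q ω - r ω := rfl
      rw [this]
      ring
    rw [split2, Finset.sum_neg_distrib]
    apply mul_neg_of_pos_of_neg hPpos
    rw [neg_lt_zero]
    have hg1 : g ω₁ ≠ 0 := by
      intro h0
      apply hbad
      have h0' : q ω₁ - p ω₁ / P = 0 := by simpa [hg, hr, hmem1] using h0
      have : q ω₁ * P = p ω₁ := by
        field_simp at h0'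
        linarith
      exact this.symm
    calc (0:ℝ) < g ω₁ * g ω₁ := mul_self_pos.mpr hg1
      _ ≤ ∑ ω, g ω * g ω :=
        Finset.single_le_sum (f := fun ω => g ω * g ω)
          (fun ω _ => mul_self_nonneg _) (Finset.mem_univ ω₁)

end Helpers

/-- a maximal distribution is either a universal common prior or
a universal multiplayer money pump, but not both. -/
theorem universal_xor (part : N → Ω → Set Ω) (t : N → Ω → Ω → ℝ)
    (hT : InfoStructure part t) (p : Ω → ℝ) (hp : IsProbDist p)
    (hmax : IsMaximalDist t p) :
    Xor' (UniversalCommonPrior part t p) (IsMaximalDist t p ∧ MMoneyPump t p) := by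
  classical
  have hΩ : Nonempty Ω := by
    by_contra h
    rw [not_nonempty_iff] at h
    have h2 := hp.2
    rw [Finset.univ_eq_empty, Finset.sum_empty] at h2
    exact one_ne_zero h2.symm
  have hCCCuniv : CCC t (Set.univ : Set Ω) := by
    refine ⟨Set.univ_nonempty, fun ω _ i => ⟨Set.univ, subset_rfl, ?_⟩⟩
    rw [mass_def]
    simpa using ((hT i).2.1 ω).2
  by_cases hCP : CommonPrior part t p
  · left
    refine ⟨⟨hCP, hmax⟩, ?_⟩
    rintro ⟨-, f, hsemi, hneg⟩
    have hpt : ∀ ω i, 0 ≤ expect (t i ω) (f i) := by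
      intro ω i
      obtain ⟨S, _, hωS, hSE⟩ := hsemi ω
      exact (hSE hωS) i
    have hsum : expect p (fun ω => ∑ i, f i ω) = ∑ i, expect p (f i) := by
      simp only [expect_def, Finset.mul_sum]
      rw [Finset.sum_comm]
    have : 0 ≤ expect p (fun ω => ∑ i, f i ω) := by
      rw [hsum]
      exact Finset.sum_nonneg fun i _ =>
        expect_nonneg (hT i) (hCP.2 i) hp.1 _ (fun ω => hpt ω i)
    linarith
  · right
    constructor
    · refine ⟨hmax, ?_⟩
      obtain ⟨i, hnd⟩ : ∃ i, ¬ Disintegrable (part i) (t i) p := by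
        by_contra h
        push_neg at h
        exact hCP ⟨hp, h⟩
      obtain ⟨f, hf0, hfneg⟩ := single_pump (hT i) hp hnd
      refine ⟨fun j ω => if j = i then f ω else 0, ?_, ?_⟩
      · intro ω
        refine ⟨Set.univ, hCCCuniv, trivial, ?_⟩
        intro ω' _ j
        by_cases hj : j = i
        · subst hj
          simpa using (hf0 ω').ge
        · simp [expect_def, hj]
      · have heq : (fun ω => ∑ j, (if j = i then f ω else 0)) = f := by
          funext ω
          simp
        rw [heq]
        exact hfneg
    · rintro ⟨hcp, -⟩
      exact hCP hcp
end

section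
/- If an information structure admits a strong common prior, then there is no acceptable trade: for any family (f_i) with Σ_i f_i ≤ 0 such that ∫ f_i dt_i(ω) ≥ 0 for all i and all ω, it cannot happen that ∫ f_{i*} dt_{i*}(ω*) > 0 for some player i* and state ω*. -/
open Finset

variable {Ω : Type*} [Fintype Ω]

variable {N : Type*} [Fintype N]

lemma type_zero_outside {part : Ω → Set Ω} {t : Ω → Ω → ℝ}
    (h1 : InfoStructure1 part t) (ω ω' : Ω) (h : ω' ∉ part ω) : t ω ω' = 0 := by
  classical
  obtain ⟨hpart, hprob, hmass, hconst⟩ := h1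
  have hsum : ∑ x, (if x ∈ part ω then (0:ℝ) else t ω x) = 0 := by
    have h2 := hmass ω
    unfold mass at h2
    have h3 := (hprob ω).2
    have hsplit : ∑ x, ((if x ∈ part ω then t ω x else 0)
        + (if x ∈ part ω then (0:ℝ) else t ω x)) = 1 := by
      rw [← h3]
      apply Finset.sum_congr rfl
      intro x _
      split <;> ring
    rw [Finset.sum_add_distrib, h2] at hsplit
    linarith
  have hnn : ∀ x ∈ Finset.univ, 0 ≤ (if x ∈ part ω then (0:ℝ) else t ω x) := by
    intro x _
    split
    · exact le_refl 0
    · exact (hprob ω).1 x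
  have := (Finset.sum_eq_zero_iff_of_nonneg hnn).mp hsum ω' (Finset.mem_univ _)
  simpa [h] using this

lemma singleton_mass {part : Ω → Set Ω} {t : Ω → Ω → ℝ} {p : Ω → ℝ}
    (h1 : InfoStructure1 part t) (hd : Disintegrable part t p) (ω' : Ω) :
    p ω' = t ω' ω' * mass p (part ω') := by
  classical
  have hd' := hd {ω'} ω'
  have hm : mass p ({ω'} ∩ part ω') = p ω' := by
    unfold mass
    rw [Finset.sum_eq_single ω']
    · simp [h1.1.1 ω']
    · intro b _ hb
      simp [Set.mem_singleton_iff, hb]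
    · intro h
      exact absurd (Finset.mem_univ ω') h
  have ht : mass (t ω') {ω'} = t ω' ω' := by
    unfold mass
    rw [Finset.sum_eq_single ω']
    · simp
    · intro b _ hb
      simp [Set.mem_singleton_iff, hb]
    · intro h
      exact absurd (Finset.mem_univ ω') h
  rw [hm, ht] at hd'
  exact hd'

lemma tower {part : Ω → Set Ω} {t : Ω → Ω → ℝ} {p : Ω → ℝ}
    (h1 : InfoStructure1 part t) (hd : Disintegrable part t p) (g : Ω → ℝ) :
    ∑ ω, p ω * _root_.expect (t ω) g = _root_.expect p g := by
  classical
  have key : ∀ ω', ∑ ω, p ω * t ω ω' = p ω' := by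
    intro ω'
    have hpt : ∀ ω, p ω * t ω ω' = if ω ∈ part ω' then p ω * t ω' ω' else 0 := by
      intro ω
      by_cases hmem : ω ∈ part ω'
      · have hteq : t ω = t ω' := h1.2.2.2 ω' ω hmem
        simp [hmem, hteq]
      · have hout : ω' ∉ part ω := by
          intro hc
          exact hmem (by rw [h1.1.2 ω ω' hc]; exact h1.1.1 ω)
        simp [hmem, type_zero_outside h1 ω ω' hout]
    calc ∑ ω, p ω * t ω ω'
        = ∑ ω, (if ω ∈ part ω' then p ω * t ω' ω' else 0) :=
          Finset.sum_congr rfl (fun ω _ => hpt ω)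
      _ = (∑ ω, if ω ∈ part ω' then p ω else 0) * t ω' ω' := by
          rw [Finset.sum_mul]
          apply Finset.sum_congr rfl
          intro ω _
          split <;> ring
      _ = t ω' ω' * mass p (part ω') := by rw [mass]; ring
      _ = p ω' := (singleton_mass h1 hd ω').symm
  unfold _root_.expect
  calc ∑ ω, p ω * ∑ ω', t ω ω' * g ω'
      = ∑ ω, ∑ ω', p ω * t ω ω' * g ω' := by
        apply Finset.sum_congr rfl
        intro ω _
        rw [Finset.mul_sum]
        apply Finset.sum_congr rfl
        intro ω' _
        ring
    _ = ∑ ω', (∑ ω, p ω * t ω ω') * g ω' := by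
        rw [Finset.sum_comm]
        apply Finset.sum_congr rfl
        intro ω' _
        rw [Finset.sum_mul]
    _ = ∑ ω', p ω' * g ω' := by
        apply Finset.sum_congr rfl
        intro ω' _
        rw [key ω']

/-- if a strong common prior exists then there is no acceptable
trade. -/
theorem no_acceptable_trade_of_strongCommonPrior
    (part : N → Ω → Set Ω) (t : N → Ω → Ω → ℝ)
    (hT : InfoStructure part t)
    (hscp : ∃ p : Ω → ℝ, StrongCommonPrior part t p)
    (f : N → Ω → ℝ) (hf : Trade f)
    (hge : ∀ i ω, 0 ≤ expect (t i ω) (f i)) :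
    ¬ ∃ (i : N) (ω : Ω), 0 < expect (t i ω) (f i) := by
  classical
  rintro ⟨i₀, ω₀, hpos⟩
  obtain ⟨p, ⟨⟨hprob, hdis⟩, hposcell⟩⟩ := hscp
  -- each player's p-expectation is nonnegative
  have hEach : ∀ i, 0 ≤ expect p (f i) := by
    intro i
    rw [← tower (hT i) (hdis i)]
    apply Finset.sum_nonneg
    intro ω _
    exact mul_nonneg (hprob.1 ω) (hge i ω)
  -- player i₀'s p-expectation is positive
  have hStrict : 0 < expect p (f i₀) := by
    rw [← tower (hT i₀) (hdis i₀)]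
    -- find a state in the cell of ω₀ with positive p-mass
    have hc := hposcell i₀ ω₀
    unfold mass at hc
    have hc' : ∑ ω : Ω, (0:ℝ) < ∑ ω, if ω ∈ part i₀ ω₀ then p ω else 0 := by
      simpa using hc
    obtain ⟨ωh, hωh⟩ := Finset.exists_lt_of_sum_lt hc' 
    obtain ⟨hmem₂, hlt⟩ := hωh
    have hmem : ωh ∈ part i₀ ω₀ := by
      by_contra h
      simp [h] at hlt
    have hp : 0 < p ωh := by
      simpa [hmem] using hlt
    have hteq : t i₀ ωh = t i₀ ω₀ := (hT i₀).2.2.2 ω₀ ωh hmem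
    apply Finset.sum_pos'
    · intro ω _
      exact mul_nonneg (hprob.1 ω) (hge i₀ ω)
    · exact ⟨ωh, Finset.mem_univ _, by rw [hteq]; exact mul_pos hp hpos⟩
  -- total p-expectation is nonpositive
  have hSum : ∑ i, expect p (f i) ≤ 0 := by
    have : ∑ i, expect p (f i) = ∑ ω, p ω * ∑ i, f i ω := by
      unfold _root_.expect
      rw [Finset.sum_comm]
      apply Finset.sum_congr rfl
      intro ω _
      rw [Finset.mul_sum]
    rw [this]
    apply Finset.sum_nonpos
    intro ω _
    exact mul_nonpos_of_nonneg_of_nonpos (hprob.1 ω) (hf ω)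
  have hpos' : 0 < ∑ i, expect p (f i) :=
    Finset.sum_pos' (fun i _ => hEach i) ⟨i₀, Finset.mem_univ _, hStrict⟩
  linarith
end

section
/- Let K₁,…,Kₙ be closed convex subsets of the unit simplex Δ^m in ℝ^m, each with nonempty relative interior. Then the relative interiors of the Kᵢ have empty common intersection if and only if there exist vectors f₁,…,fₙ ∈ ℝ^m with Σᵢ fᵢ ≤ 0 (coordinatewise), ⟨xᵢ, fᵢ⟩ ≥ 0 for all xᵢ ∈ Kᵢ and all i, and there exist an index i* and x* ∈ K_{i*} with ⟨x*, f_{i*}⟩ > 0. -/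
/-!
Put `D = K₁ × ⋯ × Kₙ` and let `C` be the diagonal `{(v, …, v)}`. A diagonal point `(v, …, v)`
of `ri D` has `v ∈ ⋂ ri Kᵢ`, so the hypothesis says that `ri D` misses the subspace `C`. Then
`0 ∉ ri (D + C)`, and separating `0` from `D + C` inside its affine span gives a linear functional
`g p = ∑ᵢ ⟨pᵢ, wᵢ⟩` that vanishes on `C` (i.e. `∑ᵢ wᵢ = 0`), is nonnegative on `D` and positive
somewhere on `D`. On the simplex `⟨x, 1⟩ = 1`, so replacing `wᵢ` by `fᵢ = wᵢ - βᵢ • 1` with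
`∑ᵢ βᵢ = 0`, each `βᵢ` at most the minimum of `⟨·, wᵢ⟩` on the compact set `Kᵢ`, keeps the column
sums at `0` and makes every `⟨·, fᵢ⟩` nonnegative on `Kᵢ`.

Conversely, for `x ∈ ⋂ ri Kᵢ` we get `0 ≤ ∑ᵢ ⟨x, fᵢ⟩ = ⟨x, ∑ᵢ fᵢ⟩ ≤ 0`, so the linear functional
`⟨·, f_{i*}⟩` attains its minimum over `K_{i*}` at the relative interior point `x`; it is then
constant on `K_{i*}`, contradicting `⟨x*, f_{i*}⟩ > 0`.
-/

open Finset Pointwise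

theorem AffineSubspace.mem_direction_iff_mem_of_zero_mem {k V : Type*} [Ring k] [AddCommGroup V]
    [Module k V] {A : AffineSubspace k V} (h0 : (0 : V) ∈ A) (y : V) :
    y ∈ A.direction ↔ y ∈ A := by
  rw [← Submodule.mem_toAffineSubspace, AffineSubspace.direction_eq_self_iff_zero_mem.2 h0]

section IntrinsicInterior

variable {F : Type*} [NormedAddCommGroup F] [NormedSpace ℝ F] {s : Set F} {x y : F}

theorem mem_intrinsicInterior_iff_ball :
    x ∈ intrinsicInterior ℝ s ↔
      x ∈ affineSpan ℝ s ∧ ∃ ε > 0, ∀ y ∈ affineSpan ℝ s, dist y x < ε → y ∈ s := by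
  constructor
  · rintro ⟨⟨x, hx⟩, hint, rfl⟩
    obtain ⟨ε, hε, hball⟩ := Metric.mem_nhds_iff.1 (mem_interior_iff_mem_nhds.1 hint)
    exact ⟨hx, ε, hε, fun y hy hdist => hball (show (⟨y, hy⟩ : affineSpan ℝ s) ∈ _ from hdist)⟩
  · rintro ⟨hx, ε, hε, hball⟩
    refine ⟨⟨x, hx⟩, mem_interior_iff_mem_nhds.2 (Metric.mem_nhds_iff.2 ?_), rfl⟩
    exact ⟨ε, hε, fun y hy => hball y.1 y.2 hy⟩

theorem exists_add_smul_sub_mem_of_mem_intrinsicInterior (hx : x ∈ intrinsicInterior ℝ s)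
    (hy : y ∈ affineSpan ℝ s) : ∃ μ : ℝ, 1 < μ ∧ y + μ • (x - y) ∈ s := by
  obtain ⟨hxs, ε, hε, hball⟩ := mem_intrinsicInterior_iff_ball.1 hx
  set δ : ℝ := ε / (2 * (‖x - y‖ + 1))
  have hδ : 0 < δ := by positivity
  refine ⟨1 + δ, by linarith, ?_⟩
  have hshift : y + (1 + δ) • (x - y) = δ • (x - y) + x := by module
  rw [hshift]
  refine hball _ (AffineSubspace.vadd_mem_of_mem_direction
    (Submodule.smul_mem _ _ (AffineSubspace.vsub_mem_direction hxs hy)) hxs) ?_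
  rw [dist_eq_norm, add_sub_cancel_right, norm_smul, Real.norm_of_nonneg hδ.le,
    div_mul_eq_mul_div, div_lt_iff₀ (by positivity)]
  nlinarith [norm_nonneg (x - y)]

theorem Convex.combo_intrinsicInterior_self_mem_intrinsicInterior (hs : Convex ℝ s)
    (hx : x ∈ intrinsicInterior ℝ s) (hy : y ∈ s) {a b : ℝ} (ha : 0 < a) (hb : 0 ≤ b)
    (hab : a + b = 1) : a • x + b • y ∈ intrinsicInterior ℝ s := by
  obtain ⟨hxs, ε, hε, hball⟩ := mem_intrinsicInterior_iff_ball.1 hx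
  have hys : y ∈ affineSpan ℝ s := subset_affineSpan ℝ s hy
  have hcombo : a • x + b • y ∈ affineSpan ℝ s := by
    simpa [← hab, AffineMap.lineMap_apply_module] using
      AffineMap.lineMap_mem (k := ℝ) b hxs hys
  refine mem_intrinsicInterior_iff_ball.2 ⟨hcombo, a * ε, by positivity, fun z hz hdist => ?_⟩
  -- the homothety of ratio `a` centred at `y` maps the `ε`-ball around `x` onto the
  -- `a * ε`-ball around `a • x + b • y`
  set z' : F := a⁻¹ • (z - (a • x + b • y)) + x
  have hz' : z' ∈ s := by
    refine hball _ ?_ ?_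
    · exact AffineSubspace.vadd_mem_of_mem_direction
        (Submodule.smul_mem _ _ (AffineSubspace.vsub_mem_direction hz hcombo)) hxs
    · rwa [dist_eq_norm, add_sub_cancel_right, norm_smul, Real.norm_of_nonneg (inv_pos.2 ha).le,
        inv_mul_lt_iff₀ ha, ← dist_eq_norm]
  have hz : z = a • z' + b • y := by
    rw [smul_add, smul_smul, mul_inv_cancel₀ ha.ne']
    module
  exact hz ▸ hs hz' hy ha.le hb hab

theorem Convex.mem_intrinsicInterior_iff [FiniteDimensional ℝ F] (hs : Convex ℝ s) :
    x ∈ intrinsicInterior ℝ s ↔ x ∈ s ∧ ∀ y ∈ s, ∃ μ : ℝ, 1 < μ ∧ y + μ • (x - y) ∈ s := by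
  refine ⟨fun hx => ⟨intrinsicInterior_subset hx, fun y hy =>
    exists_add_smul_sub_mem_of_mem_intrinsicInterior hx (subset_affineSpan ℝ s hy)⟩, ?_⟩
  rintro ⟨hxs, hext⟩
  obtain ⟨z, hz⟩ := Set.Nonempty.intrinsicInterior hs ⟨x, hxs⟩
  obtain ⟨μ, hμ, hw⟩ := hext z (intrinsicInterior_subset hz)
  have hμ0 : μ ≠ 0 := by positivity
  have hx : x = (1 - μ⁻¹) • z + μ⁻¹ • (z + μ • (x - z)) := by
    rw [smul_add, smul_smul, inv_mul_cancel₀ hμ0]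
    module
  rw [hx]
  exact hs.combo_intrinsicInterior_self_mem_intrinsicInterior hz hw
    (sub_pos.2 (inv_lt_one_of_one_lt₀ hμ)) (by positivity) (by ring)

theorem LinearMap.eq_of_isMinOn_of_mem_intrinsicInterior (ℓ : F →ₗ[ℝ] ℝ) (hmin : IsMinOn ℓ s x)
    (hx : x ∈ intrinsicInterior ℝ s) (hy : y ∈ s) : ℓ y = ℓ x := by
  obtain ⟨μ, hμ, hw⟩ :=
    exists_add_smul_sub_mem_of_mem_intrinsicInterior hx (subset_affineSpan ℝ s hy)
  have hle : ℓ x ≤ ℓ (y + μ • (x - y)) := hmin hw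
  rw [map_add, map_smul, map_sub, smul_eq_mul] at hle
  nlinarith [isMinOn_iff.1 hmin y hy]

theorem mem_intrinsicInterior_of_mem_intrinsicInterior_univ_pi {ι : Type*} [Fintype ι]
    [DecidableEq ι] [FiniteDimensional ℝ F] {K : ι → Set F} (hK : ∀ i, Convex ℝ (K i))
    {p : ι → F} (hp : p ∈ intrinsicInterior ℝ (Set.univ.pi K)) (i : ι) :
    p i ∈ intrinsicInterior ℝ (K i) := by
  obtain ⟨hpK, hext⟩ := ((convex_pi fun i _ => hK i).mem_intrinsicInterior_iff).1 hp
  refine (hK i).mem_intrinsicInterior_iff.2 ⟨hpK i trivial, fun y hy => ?_⟩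
  obtain ⟨μ, hμ, hw⟩ :=
    hext (Function.update p i y) ((Set.update_mem_pi_iff_of_mem hpK).2 fun _ => hy)
  exact ⟨μ, hμ, by simpa using hw i trivial⟩

theorem mem_intrinsicInterior_iff_mem_interior_direction (h0 : (0 : F) ∈ affineSpan ℝ s)
    (x : (affineSpan ℝ s).direction) :
    (x : F) ∈ intrinsicInterior ℝ s ↔
      x ∈ interior ((↑) ⁻¹' s : Set (affineSpan ℝ s).direction) := by
  have hV := AffineSubspace.mem_direction_iff_mem_of_zero_mem h0
  rw [mem_intrinsicInterior_iff_ball, mem_interior_iff_mem_nhds, Metric.mem_nhds_iff,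
    ← hV, and_iff_right x.2]
  constructor
  · rintro ⟨ε, hε, hball⟩
    exact ⟨ε, hε, fun y hy => hball y ((hV y).1 y.2) hy⟩
  · rintro ⟨ε, hε, hball⟩
    exact ⟨ε, hε, fun y hy hdist =>
      hball (show (⟨y, (hV y).2 hy⟩ : (affineSpan ℝ s).direction) ∈ _ from hdist)⟩

end IntrinsicInterior

theorem Convex.exists_nonneg_pos_of_zero_notMem_interior {E : Type*} [AddCommGroup E]
    [Module ℝ E] [TopologicalSpace E] [IsTopologicalAddGroup E] [ContinuousSMul ℝ E]
    {t : Set E} (ht : Convex ℝ t) (hint : (interior t).Nonempty) (h0 : (0 : E) ∉ interior t) :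
    ∃ g : StrongDual ℝ E, (∀ x ∈ t, 0 ≤ g x) ∧ ∀ x ∈ interior t, 0 < g x := by
  obtain ⟨f, hf⟩ := geometric_hahn_banach_open_point ht.interior isOpen_interior h0
  have hpos (x) (hx : x ∈ interior t) : 0 < (-f) x := by simpa using hf x hx
  refine ⟨-f, fun x hx => ?_, hpos⟩
  have hcl : closure (interior t) ⊆ {x | 0 ≤ (-f) x} :=
    closure_minimal (fun x hx => (hpos x hx).le) (isClosed_le continuous_const (-f).continuous)
  rw [ht.closure_interior_eq_closure_of_nonempty_interior hint] at hcl
  exact hcl (subset_closure hx)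

section Separation

variable {F : Type*} [NormedAddCommGroup F] [NormedSpace ℝ F] [FiniteDimensional ℝ F]

theorem Convex.exists_nonneg_pos_of_zero_notMem_intrinsicInterior {s : Set F} (hs : Convex ℝ s)
    (hne : s.Nonempty) (h0 : (0 : F) ∉ intrinsicInterior ℝ s) :
    ∃ g : StrongDual ℝ F, (∀ x ∈ s, 0 ≤ g x) ∧ ∃ x ∈ s, 0 < g x := by
  by_cases hspan : (0 : F) ∈ affineSpan ℝ s
  · set V := (affineSpan ℝ s).direction
    have hV := AffineSubspace.mem_direction_iff_mem_of_zero_mem hspan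
    obtain ⟨z, hz⟩ := hne.intrinsicInterior hs
    have hzV : z ∈ V := (hV z).2 (subset_affineSpan ℝ s (intrinsicInterior_subset hz))
    have hz' := (mem_intrinsicInterior_iff_mem_interior_direction hspan ⟨z, hzV⟩).1 hz
    have h0' : (0 : V) ∉ interior ((↑) ⁻¹' s : Set V) := fun h =>
      h0 ((mem_intrinsicInterior_iff_mem_interior_direction hspan 0).2 h)
    obtain ⟨f, hf_nonneg, hf_pos⟩ :=
      (hs.linear_preimage V.subtype).exists_nonneg_pos_of_zero_notMem_interior ⟨_, hz'⟩ h0'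
    obtain ⟨g, hg, -⟩ := exists_extension_norm_eq V f
    refine ⟨g, fun y hy => ?_, z, intrinsicInterior_subset hz, ?_⟩
    · exact hg ⟨y, (hV y).2 (subset_affineSpan ℝ s hy)⟩ ▸ hf_nonneg _ hy
    · exact hg ⟨z, hzV⟩ ▸ hf_pos _ hz'
  · obtain ⟨f, u, hf0, hfu⟩ := geometric_hahn_banach_point_closed (AffineSubspace.convex _)
      (AffineSubspace.closed_of_finiteDimensional (affineSpan ℝ s)) hspan
    rw [map_zero] at hf0
    obtain ⟨x, hx⟩ := hne
    exact ⟨f, fun y hy => (hf0.trans (hfu y (subset_affineSpan ℝ s hy))).le, x, hx,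
      hf0.trans (hfu x (subset_affineSpan ℝ s hx))⟩

theorem Convex.zero_notMem_intrinsicInterior_add_submodule {D : Set F} (hD : Convex ℝ D)
    (hne : D.Nonempty) {C : Submodule ℝ F} (hDC : Disjoint (intrinsicInterior ℝ D) C) :
    (0 : F) ∉ intrinsicInterior ℝ (D + (C : Set F)) := by
  intro h0
  obtain ⟨d, hd⟩ := hne.intrinsicInterior hD
  have hdDC : d ∈ D + (C : Set F) := ⟨d, intrinsicInterior_subset hd, 0, C.zero_mem, add_zero d⟩
  obtain ⟨μ, hμ, e, he, c, hc, hec⟩ :=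
    exists_add_smul_sub_mem_of_mem_intrinsicInterior h0 (subset_affineSpan ℝ _ hdDC)
  have hμ0 : μ ≠ 0 := by positivity
  have hmem := hD.combo_intrinsicInterior_self_mem_intrinsicInterior hd he
    (sub_pos.2 (inv_lt_one_of_one_lt₀ hμ)) (by positivity) (sub_add_cancel 1 μ⁻¹)
  -- `0` lies strictly between `d` and `e + c`, so `C` meets the open segment from `d` to `e`
  have hcombo : (1 - μ⁻¹) • d + μ⁻¹ • e = -(μ⁻¹ • c) := by
    rw [eq_sub_of_add_eq hec, smul_sub, smul_add, smul_smul, inv_mul_cancel₀ hμ0]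
    module
  rw [hcombo] at hmem
  exact hDC.ne_of_mem hmem (C.neg_mem (C.smul_mem _ hc)) rfl

theorem Convex.exists_nonneg_pos_of_disjoint_intrinsicInterior_submodule {D : Set F}
    (hD : Convex ℝ D) (hne : D.Nonempty) {C : Submodule ℝ F}
    (hDC : Disjoint (intrinsicInterior ℝ D) C) :
    ∃ g : StrongDual ℝ F, (∀ c ∈ C, g c = 0) ∧ (∀ d ∈ D, 0 ≤ g d) ∧ ∃ d ∈ D, 0 < g d := by
  obtain ⟨g, hg_nonneg, _, ⟨d, hd, c, hc, rfl⟩, hg_pos⟩ :=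
    (hD.add C.convex).exists_nonneg_pos_of_zero_notMem_intrinsicInterior
      (hne.add ⟨0, C.zero_mem⟩) (hD.zero_notMem_intrinsicInterior_add_submodule hne hDC)
  obtain ⟨d₀, hd₀⟩ := hne
  -- `t ↦ g (d₀ + t • c)` is affine and nonnegative, hence constant
  have hgC (c) (hc : c ∈ C) : g c = 0 := by
    have hline (t : ℝ) : 0 ≤ g d₀ + t * g c := by
      simpa using hg_nonneg _ ⟨d₀, hd₀, t • c, C.smul_mem t hc, rfl⟩
    by_contra hgc
    have := hline (-(g d₀ + 1) / g c)
    rw [div_mul_cancel₀ _ hgc] at this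
    linarith
  refine ⟨g, hgC, fun d hd => ?_, d, hd, by simpa [hgC c hc] using hg_pos⟩
  simpa using hg_nonneg _ ⟨d, hd, 0, C.zero_mem, add_zero d⟩

theorem disjoint_intrinsicInterior_univ_pi_range_const {ι : Type*} [Fintype ι] [DecidableEq ι]
    {K : ι → Set F} (hK : ∀ i, Convex ℝ (K i)) (h : ⋂ i, intrinsicInterior ℝ (K i) = ∅) :
    Disjoint (intrinsicInterior ℝ (Set.univ.pi K))
      (LinearMap.range (LinearMap.const (R := ℝ) (ι := ι) (M₂ := F)) : Set (ι → F)) := by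
  rw [Set.disjoint_left]
  rintro _ hp ⟨v, rfl⟩
  have hv : v ∈ ⋂ i, intrinsicInterior ℝ (K i) :=
    Set.mem_iInter.2 (mem_intrinsicInterior_of_mem_intrinsicInterior_univ_pi hK hp)
  simp [h] at hv

end Separation

theorem exists_sum_eq_zero_forall_le_of_sum_nonneg {ι E : Type*} [Fintype ι] [Nonempty ι]
    [TopologicalSpace E] {K : ι → Set E} (hK : ∀ i, IsCompact (K i))
    (hne : ∀ i, (K i).Nonempty) {φ : ι → E → ℝ} (hφ : ∀ i, ContinuousOn (φ i) (K i))
    (h : ∀ p ∈ Set.univ.pi K, 0 ≤ ∑ i, φ i (p i)) :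
    ∃ β : ι → ℝ, ∑ i, β i = 0 ∧ ∀ i, ∀ x ∈ K i, β i ≤ φ i x := by
  choose p hpK hpmin using fun i => (hK i).exists_isMinOn (hne i) (hφ i)
  set c := (∑ i, φ i (p i)) / Fintype.card ι
  have hc : 0 ≤ c := div_nonneg (h p fun i _ => hpK i) (Nat.cast_nonneg _)
  refine ⟨fun i => φ i (p i) - c, ?_, fun i x hx => ?_⟩
  · rw [sum_sub_distrib, sum_const, card_univ, nsmul_eq_mul, mul_div_cancel₀ _ (by positivity),
      sub_self]
  · linarith [isMinOn_iff.1 (hpmin i) x hx]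

theorem LinearMap.apply_eq_sum_dotProduct {ι κ : Type*} [Fintype ι] [DecidableEq ι] [Fintype κ]
    [DecidableEq κ] (g : (ι → κ → ℝ) →ₗ[ℝ] ℝ) (p : ι → κ → ℝ) :
    g p = ∑ i, p i ⬝ᵥ fun j => g (Pi.single i (Pi.single j 1)) := by
  conv_lhs => rw [← LinearMap.sum_single_apply (v := p), map_sum]
  refine sum_congr rfl fun i _ => ?_
  conv_lhs => rw [pi_eq_sum_univ' (p i), ← LinearMap.single_apply (R := ℝ), map_sum, map_sum]
  simp [dotProduct]

theorem dotProduct_sub_smul_one_of_mem_stdSimplex {ι : Type*} [Fintype ι] {x : ι → ℝ}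
    (hx : x ∈ stdSimplex ℝ ι) (v : ι → ℝ) (c : ℝ) : x ⬝ᵥ (v - c • 1) = x ⬝ᵥ v - c := by
  rw [dotProduct_sub, dotProduct_smul, dotProduct_one, hx.2, smul_eq_mul, mul_one]

theorem iInter_intrinsicInterior_eq_empty_of_separating {ι κ : Type*} [Fintype ι] [Fintype κ]
    [DecidableEq κ] {K : ι → Set (κ → ℝ)} (hsub : ∀ i, K i ⊆ stdSimplex ℝ κ) {f : ι → κ → ℝ}
    (hsum : ∀ j, ∑ i, f i j ≤ 0) (hnonneg : ∀ i, ∀ x ∈ K i, 0 ≤ x ⬝ᵥ f i) {i₀ : ι}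
    {x₀ : κ → ℝ} (hx₀ : x₀ ∈ K i₀) (hpos : 0 < x₀ ⬝ᵥ f i₀) :
    ⋂ i, intrinsicInterior ℝ (K i) = ∅ := by
  refine Set.eq_empty_of_forall_notMem fun x hx => ?_
  have hxK (i) : x ∈ K i := intrinsicInterior_subset (Set.mem_iInter.1 hx i)
  have hsum_le : ∑ i, x ⬝ᵥ f i ≤ 0 := by
    rw [← dotProduct_sum, ← dotProduct_zero x]
    exact dotProduct_le_dotProduct_of_nonneg_left (fun j => by simpa using hsum j)
      (hsub i₀ (hxK i₀)).1
  have hzero : x ⬝ᵥ f i₀ = 0 := le_antisymm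
    ((single_le_sum (fun i _ => hnonneg i x (hxK i)) (mem_univ i₀)).trans hsum_le)
    (hnonneg i₀ x (hxK i₀))
  have hmin : IsMinOn (dotProductEquiv ℝ κ (f i₀)) (K i₀) x := isMinOn_iff.2 fun y hy => by
    simpa [dotProduct_comm, hzero] using hnonneg i₀ y hy
  have := (dotProductEquiv ℝ κ (f i₀)).eq_of_isMinOn_of_mem_intrinsicInterior hmin
    (Set.mem_iInter.1 hx i₀) hx₀
  simp only [dotProductEquiv_apply_apply, dotProduct_comm (f i₀), hzero] at this
  linarith

/-- for closed convex subsets `K₁, …, Kₙ` of the unit simplex in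
`ℝ^m`, each with nonempty relative interior, the relative interiors have empty
common intersection iff there exist `f₁, …, fₙ ∈ ℝ^m` with `∑ᵢ fᵢ ≤ 0`
coordinatewise, `⟪xᵢ, fᵢ⟫ ≥ 0` for all `xᵢ ∈ Kᵢ`, and `⟪x*, f_{i*}⟫ > 0` for
some `i*` and `x* ∈ K_{i*}`. -/
theorem proper_separation_simplex (m n : ℕ) (hn : 0 < n)
    (K : Fin n → Set (Fin m → ℝ))
    (hconv : ∀ i, Convex ℝ (K i)) (hclosed : ∀ i, IsClosed (K i))
    (hsub : ∀ i, K i ⊆ stdSimplex ℝ (Fin m))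
    (hne : ∀ i, (intrinsicInterior ℝ (K i)).Nonempty) :
    (⋂ i, intrinsicInterior ℝ (K i)) = ∅ ↔
      ∃ f : Fin n → Fin m → ℝ,
        (∀ j, ∑ i, f i j ≤ 0) ∧
        (∀ i, ∀ x ∈ K i, 0 ≤ ∑ j, x j * f i j) ∧
        ∃ (i : Fin n) (x : Fin m → ℝ), x ∈ K i ∧ 0 < ∑ j, x j * f i j := by
  refine ⟨fun hempty => ?_, fun ⟨f, hsum, hnonneg, i, x, hx, hpos⟩ =>
    iInter_intrinsicInterior_eq_empty_of_separating hsub hsum hnonneg hx hpos⟩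
  have hKne (i) : (K i).Nonempty := (hne i).mono intrinsicInterior_subset
  obtain ⟨g, hgC, hgD, q, hqD, hgq⟩ :=
    (convex_pi fun i _ => hconv i).exists_nonneg_pos_of_disjoint_intrinsicInterior_submodule
      (Set.univ_pi_nonempty_iff.2 hKne)
      (disjoint_intrinsicInterior_univ_pi_range_const hconv hempty)
  set w : Fin n → Fin m → ℝ := fun i j => g (Pi.single i (Pi.single j 1))
  have hg (p) : g p = ∑ i, p i ⬝ᵥ w i := (g : _ →ₗ[ℝ] ℝ).apply_eq_sum_dotProduct p
  have hw (j) : ∑ i, w i j = 0 := by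
    simpa [hg, dotProduct_single] using hgC _ ⟨Pi.single j 1, rfl⟩
  have : Nonempty (Fin n) := Fin.pos_iff_nonempty.1 hn
  obtain ⟨β, hβ, hβle⟩ := exists_sum_eq_zero_forall_le_of_sum_nonneg
    (fun i => (isCompact_stdSimplex ℝ (Fin m)).of_isClosed_subset (hclosed i) (hsub i)) hKne
    (fun i => (continuous_id.dotProduct continuous_const).continuousOn)
    (fun p hp => hg p ▸ hgD p hp)
  obtain ⟨i, -, hi⟩ :=
    exists_lt_of_sum_lt (show ∑ i, β i < ∑ i, q i ⬝ᵥ w i by rw [hβ, ← hg]; exact hgq)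
  have hshift (i) (x) (hx : x ∈ K i) : x ⬝ᵥ (w i - β i • 1) = x ⬝ᵥ w i - β i :=
    dotProduct_sub_smul_one_of_mem_stdSimplex (hsub i hx) _ _
  refine ⟨fun i => w i - β i • 1, fun j => ?_, fun i x hx => ?_, i, q i, hqD i trivial, ?_⟩
  · simp [sum_sub_distrib, hw, hβ]
  · change 0 ≤ x ⬝ᵥ (w i - β i • 1)
    exact (hshift i x hx).symm ▸ sub_nonneg.2 (hβle i x hx)
  · change 0 < q i ⬝ᵥ (w i - β i • 1)
    exact (hshift i (q i) (hqD i trivial)).symm ▸ sub_pos.2 hi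
end
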